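/- Let T = cS with c ∈ Σ∖{$}, where S is a p-string of length n ≥ 1 ending with $, with $ occurring nowhere else in S. Let k_S = RA_S⁻¹[n] and k_T = RA_T⁻¹[n+1]. Then k_T = |T|_{Σ_{<c}} + |{ i : L°_T[i] = c, 1 ≤ i ≤ k_S }|, where Σ_{<c} = { a ∈ Σ : a < c } and |T|_{Σ_{<c}} is the number of occurrences in T of characters from Σ_{<c}. -/

import Mathlib

/-! Common framework: parameterized strings over static alphabet `σ` and
parameter alphabet `π`.  A p-string is a `List (σ ⊕ π)`. -/

variable {σ π : Type*}

instance instInhabSum [Inhabited σ] : Inhabited (σ ⊕ π) := ⟨Sum.inl default⟩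

/-- one right rotation: the last character moves to the front -/
def rotR1 {α : Type*} (W : List α) : List α := W.rotate (W.length - 1)

/-- `rotR W i` is the `i`-th right rotation `Rot(W, i)` -/
def rotR {α : Type*} (W : List α) : ℕ → List α
  | 0 => W
  | i + 1 => rotR1 (rotR W i)

/-- 1-based access `W[i]` (junk default outside the range) -/
def get1 {α : Type*} [Inhabited α] (W : List α) (i : ℕ) : α := W.getD (i - 1) default

/-- the prev-encoding `⟨T⟩`, a list over `σ ⊕ ℕ∞` -/
def prevEnc [DecidableEq σ] [DecidableEq π] (T : List (σ ⊕ π)) : List (σ ⊕ ℕ∞) :=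
  (List.range T.length).map fun k =>
    match T[k]? with
    | none => Sum.inr ⊤
    | some (Sum.inl a) => Sum.inl a
    | some (Sum.inr b) =>
      match ((List.range k).filter fun j => T[j]? = some (Sum.inr b)).max? with
      | none => Sum.inr ⊤
      | some j => Sum.inr ((k - j : ℕ) : ℕ∞)

/-- number of distinct parameter characters occurring in `W` -/
def distinctParams [DecidableEq π] (W : List (σ ⊕ π)) : ℕ :=
  (W.filterMap Sum.getRight?).dedup.length

/-- the encoding `⟦T⟧`, a list over `σ ⊕ ℕ`:  a static character is kept; a
parameter character at (1-based) position `i` is replaced by the number of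
distinct parameter characters in `Rot(T, n-i)[1:ℓ]` where `ℓ` is the leftmost
occurrence position of `T[i]` in `Rot(T, n-i)`. -/
def encodeE [DecidableEq σ] [DecidableEq π] (T : List (σ ⊕ π)) : List (σ ⊕ ℕ) :=
  (List.range T.length).map fun k =>
    match T[k]? with
    | none => Sum.inr 0
    | some (Sum.inl a) => Sum.inl a
    | some (Sum.inr b) =>
      let R := rotR T (T.length - (k + 1))
      Sum.inr (distinctParams (R.take (R.idxOf (Sum.inr b) + 1)))

/-- order on prev-encoding characters: every static character is smaller than
every element of `ℕ∞` (and `ℕ∞` carries its usual order with `∞` on top) -/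
def pvlt [LT σ] : (σ ⊕ ℕ∞) → (σ ⊕ ℕ∞) → Prop
  | Sum.inl a, Sum.inl b => a < b
  | Sum.inl _, Sum.inr _ => True
  | Sum.inr _, Sum.inl _ => False
  | Sum.inr x, Sum.inr y => x < y

/-- `T` is a p-string of length ≥ 1 ending with the static character `d`,
which occurs nowhere else in `T`. -/
def EndsWith [DecidableEq σ] [DecidableEq π] (T : List (σ ⊕ π)) (d : σ) : Prop :=
  1 ≤ T.length ∧ T.getLast? = some (Sum.inl d) ∧ T.count (Sum.inl d) = 1

/-- `RA` represents the parameterized rotation array `RA_T` (0-based indices: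
`RA_T[i] = (RA ⟨i-1⟩).val + 1`): the prev-encodings of the rotations are listed
in strictly increasing lexicographic order. -/
def IsRA [LinearOrder σ] [DecidableEq π] (T : List (σ ⊕ π))
    (RA : Fin T.length ≃ Fin T.length) : Prop :=
  ∀ i j : Fin T.length, i < j →
    List.Lex pvlt (prevEnc (rotR T ((RA i).val + 1))) (prevEnc (rotR T ((RA j).val + 1)))

/-- `LF` represents the LF mapping: `LF_T(i) = j` iff `T_{RA_T[i]+1} = T_{RA_T[j]}`. -/
def IsLF [LinearOrder σ] [DecidableEq π] (T : List (σ ⊕ π))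
    (RA LF : Fin T.length ≃ Fin T.length) : Prop :=
  ∀ i : Fin T.length, rotR T ((RA i).val + 2) = rotR T ((RA (LF i)).val + 1)

/-- the pBWT array `L_T[i] = ⟦T_{RA_T[i]}⟧[n]` -/
def Larr [LinearOrder σ] [DecidableEq π] [Inhabited σ] (T : List (σ ⊕ π))
    (RA : Fin T.length ≃ Fin T.length) (i : Fin T.length) : σ ⊕ ℕ :=
  get1 (encodeE (rotR T ((RA i).val + 1))) T.length

/-- the array `F_T[i] = ⟦T_{RA_T[i]}⟧[1]` -/
def Farr [LinearOrder σ] [DecidableEq π] [Inhabited σ] (T : List (σ ⊕ π))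
    (RA : Fin T.length ≃ Fin T.length) (i : Fin T.length) : σ ⊕ ℕ :=
  get1 (encodeE (rotR T ((RA i).val + 1))) 1

/-- longest common prefix of two lists -/
def lcp {α : Type*} [DecidableEq α] : List α → List α → List α
  | a :: as, b :: bs => if a = b then a :: lcp as bs else []
  | _, _ => []

/-- `lcp∞(X, Y)`: the number of `∞`'s in the longest common prefix of `X` and `Y` -/
def lcpInf [DecidableEq σ] (X Y : List (σ ⊕ ℕ∞)) : ℕ :=
  (lcp X Y).count (Sum.inr ⊤)

/-- the `∞`-LCP array (1-based): `LCP∞_T[i] = lcp∞(⟨T_{RA_T[i]}⟩, ⟨T_{RA_T[i+1]}⟩)`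
for `1 ≤ i < n`, and `0` otherwise. -/
def LCPa [LinearOrder σ] [DecidableEq π] (T : List (σ ⊕ π))
    (RA : Fin T.length ≃ Fin T.length) (i : ℕ) : ℕ :=
  if h : 1 ≤ i ∧ i < T.length then
    lcpInf (prevEnc (rotR T ((RA ⟨i - 1, by omega⟩).val + 1)))
           (prevEnc (rotR T ((RA ⟨i, h.2⟩).val + 1)))
  else 0

/-- parameterized match: a bijection on `σ ⊕ π` fixing all static characters
renames `S` into `T` -/
def PMatch (S T : List (σ ⊕ π)) : Prop :=
  ∃ f : (σ ⊕ π) ≃ (σ ⊕ π), (∀ a : σ, f (Sum.inl a) = Sum.inl a) ∧ S.map f = T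

/-- leftmost (1-based) occurrence position of `c` in `W`, `0` if absent -/
def leftPos [DecidableEq σ] [DecidableEq π] (W : List (σ ⊕ π)) (c : σ ⊕ π) : ℕ :=
  if W.contains c then W.idxOf c + 1 else 0

/-- rightmost (1-based) occurrence position of `c` in `W`, `0` if absent -/
def rightPos [DecidableEq σ] [DecidableEq π] (W : List (σ ⊕ π)) (c : σ ⊕ π) : ℕ :=
  if W.contains c then W.length - W.reverse.idxOf c else 0

/-! A rank among rotations counts the rotations with a smaller prev-encoding, and
`⟨T⟩ = c⟨S⟩`. Comparing first characters, a rotation of `T` is smaller than `T` iff it starts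
with a static character below `c` (there is one such rotation per occurrence of that character
in `T`), or it starts with `c` and its remainder is smaller than `⟨S⟩`. Writing `S = A c B`, the
rotation `c B c A` of `T` and the rotation `B A c` of `S` both begin with `B`, which ends with `$`,
while the prefix of `S` of length `|B|` contains no `$`; so both compare with `⟨S⟩` exactly as
`⟨B⟩` does. The rotations `B A c` of `S` are those with `L°_T = c`, and those below `⟨S⟩` are the
ones of rank `< k_S`. Finally `S` itself (rank `k_S`, where `L°_T = c`) corresponds to `T`
itself. -/

open Finset

section Rotation

variable {α : Type*}

theorem length_rotR (W : List α) (r : ℕ) : (rotR W r).length = W.length := by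
  induction r with
  | zero => rfl
  | succ r ih => rw [rotR, rotR1, List.length_rotate, ih]

theorem rotR_eq_rotate (W : List α) {r : ℕ} (hr : r ≤ W.length) :
    rotR W r = W.rotate (W.length - r) := by
  induction r with
  | zero => simp [rotR]
  | succ r ih =>
    rw [rotR, rotR1, ih (by omega), List.length_rotate, List.rotate_rotate,
      show W.length - r + (W.length - 1) = W.length - (r + 1) + W.length by omega,
      ← List.rotate_rotate]
    simpa using List.rotate_length (W.rotate (W.length - (r + 1)))

theorem rotR_length_self (W : List α) : rotR W W.length = W := by
  rw [rotR_eq_rotate W le_rfl, Nat.sub_self, List.rotate_zero]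

theorem getElem?_zero_rotR (W : List α) {r : ℕ} (h0 : 0 < r) (hr : r ≤ W.length) :
    (rotR W r)[0]? = W[W.length - r]? := by
  rw [rotR_eq_rotate W hr, List.getElem?_rotate (by omega), Nat.zero_add,
    Nat.mod_eq_of_lt (by omega)]

theorem getElem?_rotR_last (W : List α) {r : ℕ} (hr : r < W.length) :
    (rotR W r)[W.length - 1]? = W[W.length - 1 - r]? := by
  rw [rotR_eq_rotate W hr.le, List.getElem?_rotate (by omega),
    show W.length - 1 + (W.length - r) = W.length - 1 - r + W.length by omega,
    Nat.add_mod_right, Nat.mod_eq_of_lt (by omega)]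

end Rotation

theorem List.lex_append_iff_of_length_eq {α : Type*} {r : α → α → Prop} :
    ∀ {l₁ l₂ l₃ l₄ : List α}, l₁.length = l₃.length → l₁ ≠ l₃ →
      (List.Lex r (l₁ ++ l₂) (l₃ ++ l₄) ↔ List.Lex r l₁ l₃)
  | [], _, [], _, _, h => (h rfl).elim
  | [], _, _ :: _, _, h, _ => by simp at h
  | _ :: _, _, [], _, h, _ => by simp at h
  | a :: l₁, l₂, b :: l₃, l₄, hlen, hne => by
    simp only [List.cons_append, List.cons_lex_cons_iff]
    by_cases hab : a = b
    · subst hab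
      rw [lex_append_iff_of_length_eq (Nat.succ_injective hlen) fun h => hne (h ▸ rfl)]
    · simp [hab]

theorem List.countP_eq_card_filter_getElem {α : Type*} (l : List α) (p : α → Bool) :
    l.countP p = #{i : Fin l.length | p l[i] = true} := by
  have h := Multiset.countP_map l.get Finset.univ.val (fun a => p a = true)
  rw [Fin.univ_val_map, List.ofFn_get, Multiset.coe_countP] at h
  simp only [Bool.decide_eq_true] at h
  exact h

theorem List.max?_map_succ : ∀ l : List ℕ, (l.map Nat.succ).max? = l.max?.map Nat.succ
  | [] => rfl
  | a :: l => by
    rw [List.map_cons, List.max?_cons, List.max?_cons, List.max?_map_succ l]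
    cases l.max? <;> simp [Nat.succ_max_succ]

section PrevEncoding

variable [DecidableEq σ] [DecidableEq π]

def prevEntry (X : List (σ ⊕ π)) (k : ℕ) : σ ⊕ ℕ∞ :=
  match X[k]? with
  | none => Sum.inr ⊤
  | some (Sum.inl a) => Sum.inl a
  | some (Sum.inr b) =>
    match ((List.range k).filter fun j => X[j]? = some (Sum.inr b)).max? with
    | none => Sum.inr ⊤
    | some j => Sum.inr ((k - j : ℕ) : ℕ∞)

theorem prevEnc_eq_map_prevEntry (X : List (σ ⊕ π)) :
    prevEnc X = (List.range X.length).map (prevEntry X) := rfl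

theorem length_prevEnc (X : List (σ ⊕ π)) : (prevEnc X).length = X.length := by
  simp [prevEnc_eq_map_prevEntry]

theorem prevEntry_eq_inl_iff (X : List (σ ⊕ π)) (k : ℕ) (a : σ) :
    prevEntry X k = Sum.inl a ↔ X[k]? = some (Sum.inl a) := by
  unfold prevEntry
  rcases X[k]? with _ | _ | b
  · simp
  · simp
  · dsimp only
    split <;> simp

theorem mem_prevEnc_inl_iff (X : List (σ ⊕ π)) (a : σ) :
    Sum.inl a ∈ prevEnc X ↔ Sum.inl a ∈ X := by
  simp only [prevEnc_eq_map_prevEntry, List.mem_map, List.mem_range, prevEntry_eq_inl_iff]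
  constructor
  · rintro ⟨k, -, hk⟩
    exact List.mem_of_getElem? hk
  · intro h
    obtain ⟨k, hk⟩ := List.mem_iff_getElem?.1 h
    exact ⟨k, (List.getElem?_eq_some_iff.1 hk).1, hk⟩

theorem prevEntry_congr {X Y : List (σ ⊕ π)} {k : ℕ} (h : ∀ j ≤ k, X[j]? = Y[j]?) :
    prevEntry X k = prevEntry Y k := by
  have hfilter : ∀ b : π, ((List.range k).filter fun j => X[j]? = some (Sum.inr b)) =
      (List.range k).filter fun j => Y[j]? = some (Sum.inr b) := fun b =>
    List.filter_congr fun j hj => by rw [h j (List.mem_range.1 hj).le]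
  unfold prevEntry
  rw [h k le_rfl]
  rcases Y[k]? with _ | _ | b
  · rfl
  · rfl
  · simp only [hfilter b]

theorem prevEnc_prefix_append (X Y : List (σ ⊕ π)) : prevEnc X <+: prevEnc (X ++ Y) := by
  refine ⟨(List.range Y.length).map (prevEntry (X ++ Y) ∘ (X.length + ·)), ?_⟩
  rw [prevEnc_eq_map_prevEntry, prevEnc_eq_map_prevEntry, List.length_append, List.range_add,
    List.map_append, List.map_map]
  congr 1
  refine List.map_congr_left fun k hk => prevEntry_congr fun j hj => ?_
  rw [List.getElem?_append_left (by have := List.mem_range.1 hk; omega)]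

theorem prevEntry_cons_inl_succ (c : σ) (X : List (σ ⊕ π)) (k : ℕ) :
    prevEntry (Sum.inl c :: X) (k + 1) = prevEntry X k := by
  unfold prevEntry
  rw [List.getElem?_cons_succ]
  rcases X[k]? with _ | _ | b
  · rfl
  · rfl
  · have hfilter : ((List.range (k + 1)).filter fun j =>
          (Sum.inl c :: X)[j]? = some (Sum.inr b)) =
        ((List.range k).filter fun j => X[j]? = some (Sum.inr b)).map Nat.succ := by
      simp [List.range_succ_eq_map, List.filter_map, Function.comp_def]
    simp only [hfilter, List.max?_map_succ]
    cases ((List.range k).filter fun j => X[j]? = some (Sum.inr b)).max? <;> simp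

theorem prevEnc_cons_inl (c : σ) (X : List (σ ⊕ π)) :
    prevEnc (Sum.inl c :: X) = Sum.inl c :: prevEnc X := by
  rw [prevEnc_eq_map_prevEntry, prevEnc_eq_map_prevEntry, List.length_cons,
    List.range_succ_eq_map, List.map_cons, List.map_map]
  congr 1
  exact List.map_congr_left fun k _ => prevEntry_cons_inl_succ c X k

end PrevEncoding

theorem lex_prevEnc_append_iff [DecidableEq σ] [DecidableEq π] {R : σ ⊕ ℕ∞ → σ ⊕ ℕ∞ → Prop}
    {B S : List (σ ⊕ π)} (Y : List (σ ⊕ π)) (hB : B.length ≤ S.length)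
    (hne : prevEnc B ≠ prevEnc (S.take B.length)) :
    List.Lex R (prevEnc (B ++ Y)) (prevEnc S) ↔
      List.Lex R (prevEnc B) (prevEnc (S.take B.length)) := by
  obtain ⟨E, hE⟩ := prevEnc_prefix_append B Y
  obtain ⟨F, hF⟩ := prevEnc_prefix_append (S.take B.length) (S.drop B.length)
  rw [List.take_append_drop] at hF
  rw [← hE, ← hF]
  exact List.lex_append_iff_of_length_eq (by simp [length_prevEnc, hB]) hne

-- `EndsWith` counts with the derived `BEq` of `Sum`, which comes without a `LawfulBEq` instance.
instance [BEq σ] [BEq π] [LawfulBEq σ] [LawfulBEq π] : LawfulBEq (σ ⊕ π) where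
  eq_of_beq {a b} h := by
    rcases a with a | a <;> rcases b with b | b
    · exact congrArg Sum.inl (eq_of_beq (α := σ) h)
    · exact (Bool.false_ne_true h).elim
    · exact (Bool.false_ne_true h).elim
    · exact congrArg Sum.inr (eq_of_beq (α := π) h)
  rfl {a} := by
    rcases a with a | a
    · exact BEq.rfl (a := a)
    · exact BEq.rfl (a := a)

namespace EndsWith

variable [DecidableEq σ] [DecidableEq π] {S : List (σ ⊕ π)} {d : σ}

theorem getElem?_last (hS : EndsWith S d) : S[S.length - 1]? = some (Sum.inl d) := by
  rw [← List.getLast?_eq_getElem?]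
  exact hS.2.1

theorem mem_drop (hS : EndsWith S d) {k : ℕ} (hk : k < S.length) : Sum.inl d ∈ S.drop k := by
  apply List.mem_of_getLast?
  rw [List.getLast?_drop, if_neg (by omega)]
  exact hS.2.1

theorem not_mem_take (hS : EndsWith S d) {k : ℕ} (hk : k < S.length) :
    Sum.inl d ∉ S.take k := by
  have hcount := hS.2.2
  rw [← List.take_append_drop k S, List.count_append] at hcount
  have := List.count_pos_iff.2 (hS.mem_drop hk)
  exact List.count_eq_zero.1 (by omega)

end EndsWith

theorem lex_prevEnc_rotR_cons_iff [DecidableEq σ] [DecidableEq π]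
    {R : σ ⊕ ℕ∞ → σ ⊕ ℕ∞ → Prop} [Std.Irrefl R] {S : List (σ ⊕ π)} {c d : σ}
    (hS : EndsWith S d) {r : ℕ} (hr0 : 0 < r) (hr : r < S.length)
    (hc : S[S.length - 1 - r]? = some (Sum.inl c)) :
    List.Lex R (prevEnc (rotR (Sum.inl c :: S) (r + 1))) (prevEnc (Sum.inl c :: S)) ↔
      List.Lex R (prevEnc (rotR S r)) (prevEnc S) := by
  obtain ⟨hm, hSm⟩ := List.getElem?_eq_some_iff.1 hc
  obtain ⟨A, B, hAB, hA⟩ : ∃ A B, S = A ++ [Sum.inl c] ++ B ∧ A.length = S.length - 1 - r :=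
    ⟨S.take (S.length - 1 - r), S.drop (S.length - 1 - r + 1), by
      rw [List.append_assoc, List.singleton_append, ← hSm, ← List.drop_eq_getElem_cons hm,
        List.take_append_drop], by simp; omega⟩
  have hB : B.length = r := by simp [hAB] at hA hr ⊢; omega
  have hrotS : rotR S r = B ++ (A ++ [Sum.inl c]) := by
    rw [rotR_eq_rotate S hr.le, show S.length - r = (A ++ [Sum.inl c]).length by simp [hAB]; omega,
      hAB, List.rotate_append_length_eq]
  have hrotT : rotR (Sum.inl c :: S) (r + 1) = Sum.inl c :: (B ++ Sum.inl c :: A) := by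
    rw [rotR_eq_rotate _ (by simp; omega),
      show (Sum.inl c :: S).length - (r + 1) = (Sum.inl c :: A).length by simp [hAB]; omega,
      show Sum.inl c :: S = (Sum.inl c :: A) ++ (Sum.inl c :: B) by simp [hAB],
      List.rotate_append_length_eq, List.cons_append]
  have hBS : B.length ≤ S.length := by omega
  have hne : prevEnc B ≠ prevEnc (S.take B.length) := by
    intro h
    have hdB : Sum.inl d ∈ B := by
      simpa [hAB, List.drop_left'] using hS.mem_drop (k := A.length + 1) (by simp [hAB]; omega)
    rw [← mem_prevEnc_inl_iff, h, mem_prevEnc_inl_iff] at hdB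
    exact hS.not_mem_take (by omega) hdB
  rw [hrotT, hrotS, prevEnc_cons_inl, prevEnc_cons_inl, List.lex_cons_iff,
    lex_prevEnc_append_iff _ hBS hne, lex_prevEnc_append_iff _ hBS hne]

theorem get1_encodeE_eq_inl_iff [DecidableEq σ] [DecidableEq π] [Inhabited σ]
    {X : List (σ ⊕ π)} {k : ℕ} (hk : k < X.length) (a : σ) :
    get1 (encodeE X) (k + 1) = Sum.inl a ↔ X[k]? = some (Sum.inl a) := by
  simp only [get1, encodeE, Nat.add_sub_cancel, List.getD_eq_getElem?_getD, List.getElem?_map,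
    List.getElem?_range hk, Option.map_some, Option.getD_some]
  rcases X[k]? with _ | _ | b <;> simp

theorem get1_encodeE_rotR_length_eq_inl_iff [DecidableEq σ] [DecidableEq π] [Inhabited σ]
    {W : List (σ ⊕ π)} {r : ℕ} (hr : r < W.length) (a : σ) :
    get1 (encodeE (rotR W r)) W.length = Sum.inl a ↔ W[W.length - 1 - r]? = some (Sum.inl a) := by
  nth_rewrite 1 [show W.length = W.length - 1 + 1 by omega]
  rw [get1_encodeE_eq_inl_iff (by rw [length_rotR]; omega), getElem?_rotR_last W hr]

section RotationArray

variable [LinearOrder σ] [DecidableEq π]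

instance : DecidableRel (pvlt (σ := σ)) := fun x y =>
  match x, y with
  | Sum.inl a, Sum.inl b => inferInstanceAs (Decidable (a < b))
  | Sum.inl _, Sum.inr _ => isTrue trivial
  | Sum.inr _, Sum.inl _ => isFalse id
  | Sum.inr x, Sum.inr y => inferInstanceAs (Decidable (x < y))

instance : Std.Asymm (pvlt (σ := σ)) where
  asymm := by
    rintro (a | x) (b | y) h₁ h₂ <;> simp only [pvlt] at h₁ h₂ <;> exact lt_asymm h₁ h₂

def lexSmallerRotations (W : List (σ ⊕ π)) : Finset (Fin W.length) :=
  {q | List.Lex pvlt (prevEnc (rotR W (q + 1))) (prevEnc W)}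

theorem IsRA.lt_iff {W : List (σ ⊕ π)} {RA : Fin W.length ≃ Fin W.length} (h : IsRA W RA)
    {i j : Fin W.length} :
    i < j ↔ List.Lex pvlt (prevEnc (rotR W (RA i + 1))) (prevEnc (rotR W (RA j + 1))) := by
  refine ⟨h i j, fun hij => ?_⟩
  rcases lt_trichotomy i j with hlt | rfl | hgt
  · exact hlt
  · exact absurd hij (asymm hij)
  · exact absurd hij (asymm (h j i hgt))

theorem IsRA.lt_iff_mem {W : List (σ ⊕ π)} {RA : Fin W.length ≃ Fin W.length} (h : IsRA W RA)
    {k : Fin W.length} (hk : (RA k).val + 1 = W.length) {i : Fin W.length} :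
    i < k ↔ RA i ∈ lexSmallerRotations W := by
  rw [h.lt_iff, hk, rotR_length_self, lexSmallerRotations, Finset.mem_filter]
  simp

theorem IsRA.card_lexSmallerRotations {W : List (σ ⊕ π)} {RA : Fin W.length ≃ Fin W.length}
    (h : IsRA W RA) {k : Fin W.length} (hk : (RA k).val + 1 = W.length) :
    #(lexSmallerRotations W) = k := by
  rw [← Finset.card_equiv RA (s := Finset.Iio k) fun i => by rw [Finset.mem_Iio, h.lt_iff_mem hk],
    Fin.card_Iio]

theorem IsRA.card_filter_le_and {W : List (σ ⊕ π)} {RA : Fin W.length ≃ Fin W.length}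
    (h : IsRA W RA) {k : Fin W.length} (hk : (RA k).val + 1 = W.length)
    (P : Fin W.length → Prop) [DecidablePred P] (hPk : P (RA k)) :
    #{i | i ≤ k ∧ P (RA i)} = #{p ∈ lexSmallerRotations W | P p} + 1 := by
  have hinsert : Finset.univ.filter (fun i => i ≤ k ∧ P (RA i)) =
      insert k (Finset.univ.filter fun i => i < k ∧ P (RA i)) := by
    ext i
    simp only [Finset.mem_filter, Finset.mem_univ, true_and, Finset.mem_insert]
    constructor
    · rintro ⟨hik, hP⟩
      exact (eq_or_lt_of_le hik).imp id fun hlt => ⟨hlt, hP⟩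
    · rintro (rfl | ⟨hlt, hP⟩)
      exacts [⟨le_rfl, hPk⟩, ⟨hlt.le, hP⟩]
  rw [hinsert, Finset.card_insert_of_notMem (by simp)]
  congr 1
  refine Finset.card_equiv RA fun i => ?_
  simp [h.lt_iff_mem hk]

end RotationArray

section StaticHead

variable [LinearOrder σ] [DecidableEq π]

theorem lex_prevEnc_cons_inl_iff {X : List (σ ⊕ π)} {x : σ ⊕ π} (hx : X[0]? = some x) (c : σ)
    (E : List (σ ⊕ ℕ∞)) :
    List.Lex pvlt (prevEnc X) (Sum.inl c :: E) ↔
      Sum.elim (fun a => decide (a < c)) (fun _ => false) x = true ∨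
        (x = Sum.inl c ∧ List.Lex pvlt (prevEnc X) (Sum.inl c :: E)) := by
  obtain ⟨y, Y, rfl⟩ := List.exists_cons_of_ne_nil (l := X) (by rintro rfl; simp at hx)
  rw [prevEnc_eq_map_prevEntry, List.length_cons, List.range_succ_eq_map, List.map_cons,
    List.cons_lex_cons_iff]
  rcases x with a | b
  · rw [(prevEntry_eq_inl_iff _ 0 a).2 hx]
    by_cases hac : a = c
    · subst hac
      simp [pvlt]
    · simp [pvlt, hac]
  · obtain ⟨v, hv⟩ : ∃ v, prevEntry (y :: Y) 0 = Sum.inr v := by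
      rcases he : prevEntry (y :: Y) 0 with a | v
      · rw [prevEntry_eq_inl_iff, hx] at he
        simp at he
      · exact ⟨v, rfl⟩
    simp [hv, pvlt]

theorem card_lexSmallerRotations_cons (c : σ) (S : List (σ ⊕ π)) :
    #(lexSmallerRotations (Sum.inl c :: S)) =
      (Sum.inl c :: S).countP (Sum.elim (fun a => decide (a < c)) fun _ => false) +
        #{q ∈ lexSmallerRotations (Sum.inl c :: S) |
          (Sum.inl c :: S)[S.length - q.val]? = some (Sum.inl c)} := by
  set T := Sum.inl c :: S
  set p : σ ⊕ π → Bool := Sum.elim (fun a => decide (a < c)) fun _ => false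
  have hhead : ∀ q : Fin T.length, T[S.length - q.val]? = some T[q.rev] := fun q => by
    rw [show S.length - q.val = q.rev by simp [T, Fin.val_rev]]
    exact List.getElem?_eq_getElem q.rev.isLt
  have hmem : ∀ q : Fin T.length, q ∈ lexSmallerRotations T ↔
      p T[q.rev] = true ∨
        (T[S.length - q.val]? = some (Sum.inl c) ∧ q ∈ lexSmallerRotations T) := by
    intro q
    have hx : (rotR T (q + 1))[0]? = some T[q.rev] := by
      rw [getElem?_zero_rotR T (by omega) q.isLt, ← hhead,
        show T.length - (q + 1) = S.length - q by simp [T]]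
    simp only [lexSmallerRotations, Finset.mem_filter, Finset.mem_univ, true_and, hhead,
      Option.some_inj]
    rw [prevEnc_cons_inl]
    exact lex_prevEnc_cons_inl_iff hx c _
  have hdisj : Disjoint ({q | p T[q.rev] = true} : Finset (Fin T.length))
      {q ∈ lexSmallerRotations T | T[S.length - q.val]? = some (Sum.inl c)} := by
    refine Finset.disjoint_left.2 fun q h₁ h₂ => ?_
    simp only [Finset.mem_filter, hhead, Option.some_inj] at h₁ h₂
    simp [h₂.2, p] at h₁
  have hcount : #({q | p T[q.rev] = true} : Finset (Fin T.length)) = T.countP p := by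
    rw [List.countP_eq_card_filter_getElem]
    exact Finset.card_equiv Fin.revPerm fun q => by simp
  rw [← hcount, ← Finset.card_union_of_disjoint hdisj]
  congr 1
  ext q
  refine (hmem q).trans ?_
  simp only [Finset.mem_union, Finset.mem_filter, Finset.mem_univ, true_and]
  tauto

theorem card_filter_lexSmallerRotations_cons {S : List (σ ⊕ π)} {c d : σ} (hS : EndsWith S d)
    (hc : c ≠ d) :
    #{q ∈ lexSmallerRotations (Sum.inl c :: S) |
        (Sum.inl c :: S)[S.length - q.val]? = some (Sum.inl c)} =
      #{p ∈ lexSmallerRotations S |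
        (Sum.inl c :: S)[S.length - (p.val + 1)]? = some (Sum.inl c)} := by
  have hn : 0 < S.length := hS.1
  simp only [lexSmallerRotations, Finset.filter_filter]
  refine (Fin.card_filter_univ_succ (n := S.length) _).trans ?_
  rw [if_neg]
  · refine congrArg Finset.card (Finset.filter_congr fun p _ => ?_)
    rw [Fin.val_succ]
    refine and_congr_left fun hp => ?_
    rcases (show (p : ℕ) + 1 ≤ S.length from p.isLt).lt_or_eq with hlt | heq
    · have hp' : S[S.length - 1 - (p + 1)]? = some (Sum.inl c) := by
        rwa [show S.length - (p + 1) = S.length - 1 - (p + 1) + 1 by omega,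
          List.getElem?_cons_succ] at hp
      exact lex_prevEnc_rotR_cons_iff hS (Nat.succ_pos _) hlt hp'
    · rw [heq, rotR_length_self, show S.length + 1 = (Sum.inl c :: S).length from rfl,
        rotR_length_self]
      exact iff_of_false (fun h => asymm h h) fun h => asymm h h
  · rintro ⟨-, h⟩
    rw [Fin.val_zero, Nat.sub_zero, show S.length = S.length - 1 + 1 by omega,
      List.getElem?_cons_succ, hS.getElem?_last] at h
    exact hc (Sum.inl_injective (Option.some_injective _ h)).symm

end StaticHead

/-- `kS.val + 1 = k_S` and `kT.val + 1 = k_T`: the ranks are 0-based. -/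
theorem position_static [LinearOrder σ] [DecidableEq π] [Inhabited σ]
    (d : σ)
    (S : List (σ ⊕ π)) (hS : EndsWith S d)
    (cs : σ) (hcs : cs ≠ d)
    (RAS : Fin S.length ≃ Fin S.length) (hRAS : IsRA S RAS)
    (RAT : Fin (Sum.inl cs :: S).length ≃ Fin (Sum.inl cs :: S).length)
    (hRAT : IsRA (Sum.inl cs :: S) RAT)
    (kS : Fin S.length) (hkS : (RAS kS).val + 1 = S.length)
    (kT : Fin (Sum.inl cs :: S).length) (hkT : (RAT kT).val + 1 = S.length + 1) :
    kT.val + 1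
      = ((Sum.inl cs :: S).countP fun ch =>
          match ch with
          | Sum.inl a => decide (a < cs)
          | Sum.inr _ => false)
        + (Finset.univ.filter fun i : Fin S.length =>
            i ≤ kS ∧
            get1 (encodeE (rotR (Sum.inl cs :: S) ((RAS i).val + 1))) (S.length + 1)
              = Sum.inl cs).card := by
  have hlast : ∀ p : Fin S.length,
      get1 (encodeE (rotR (Sum.inl cs :: S) (p + 1))) (S.length + 1) = Sum.inl cs ↔
        (Sum.inl cs :: S)[S.length - (p + 1)]? = some (Sum.inl cs) := fun p =>
    get1_encodeE_rotR_length_eq_inl_iff (W := Sum.inl cs :: S) (by simp) cs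
  have hkS' : (Sum.inl cs :: S)[S.length - ((RAS kS).val + 1)]? = some (Sum.inl cs) := by
    rw [hkS, Nat.sub_self]
    rfl
  rw [hRAS.card_filter_le_and hkS
      (fun p => get1 (encodeE (rotR (Sum.inl cs :: S) (p + 1))) (S.length + 1) = Sum.inl cs)
      ((hlast _).2 hkS'),
    Finset.filter_congr fun p _ => hlast p, ← card_filter_lexSmallerRotations_cons hS hcs,
    ← hRAT.card_lexSmallerRotations hkT, card_lexSmallerRotations_cons, add_assoc]
  congr 2
  funext ch
  rcases ch with a | b <;> rfl
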